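/- Let q ∈ K. For all plane posets P, Q, R: ⟨P ▷ Q, R⟩_q = Σ over decompositions R = R₁R₂ (as a composition of plane subposets) of q^{|R₁|·|R₂|} ⟨P, R₁⟩_q ⟨Q, R₂⟩_q. Equivalently, with the coproduct Δ'_q defined by Δ'_q(R) = Σ_{R₁R₂ = R} q^{|R₁||R₂|} R₁ ⊗ R₂, one has ⟨x ▷ y, z⟩_q = ⟨x ⊗ y, Δ'_q(z)⟩_q for all x, y, z ∈ h_PP. -/

import Mathlib

open scoped TensorProduct
open scoped Classical

noncomputable section

/-- A plane poset structure on a set `α`: two partial orders `≤_h` (`hle`) and `≤_r` (`rle`)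
such that two distinct elements are comparable for `≤_h` if and only if they are not
comparable for `≤_r`. -/
structure PlanePoset (α : Type) where
  hle : α → α → Prop
  rle : α → α → Prop
  hle_refl : ∀ x, hle x x
  hle_antisymm : ∀ x y, hle x y → hle y x → x = y
  hle_trans : ∀ x y z, hle x y → hle y z → hle x z
  rle_refl : ∀ x, rle x x
  rle_antisymm : ∀ x y, rle x y → rle y x → x = y
  rle_trans : ∀ x y z, rle x y → rle y z → rle x z
  compat : ∀ x y, x ≠ y → ((hle x y ∨ hle y x) ↔ ¬ (rle x y ∨ rle y x))

namespace PlanePoset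

variable {α β : Type}

/-- The induced (total) order `x ≤ y iff x ≤_h y or x ≤_r y`. -/
def tle (P : PlanePoset α) (x y : α) : Prop := P.hle x y ∨ P.rle x y

/-- Transport of a plane poset structure along a bijection. -/
def map (e : α ≃ β) (P : PlanePoset α) : PlanePoset β where
  hle x y := P.hle (e.symm x) (e.symm y)
  rle x y := P.rle (e.symm x) (e.symm y)
  hle_refl x := P.hle_refl _
  hle_antisymm x y h1 h2 := e.symm.injective (P.hle_antisymm _ _ h1 h2)
  hle_trans x y z h1 h2 := P.hle_trans _ _ _ h1 h2
  rle_refl x := P.rle_refl _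
  rle_antisymm x y h1 h2 := e.symm.injective (P.rle_antisymm _ _ h1 h2)
  rle_trans x y z h1 h2 := P.rle_trans _ _ _ h1 h2
  compat x y hxy := P.compat _ _ fun h => hxy (e.symm.injective h)

@[simp] theorem map_hle (e : α ≃ β) (P : PlanePoset α) (x y : β) :
    (P.map e).hle x y ↔ P.hle (e.symm x) (e.symm y) := Iff.rfl

@[simp] theorem map_rle (e : α ≃ β) (P : PlanePoset α) (x y : β) :
    (P.map e).rle x y ↔ P.rle (e.symm x) (e.symm y) := Iff.rfl

/-- The composition `PQ` of two plane posets: `x ≤_r y` for every `x ∈ P`, `y ∈ Q`. -/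
def comp (P : PlanePoset α) (Q : PlanePoset β) : PlanePoset (α ⊕ β) where
  hle x y :=
    match x, y with
    | Sum.inl a, Sum.inl b => P.hle a b
    | Sum.inr a, Sum.inr b => Q.hle a b
    | _, _ => False
  rle x y :=
    match x, y with
    | Sum.inl a, Sum.inl b => P.rle a b
    | Sum.inr a, Sum.inr b => Q.rle a b
    | Sum.inl _, Sum.inr _ => True
    | Sum.inr _, Sum.inl _ => False
  hle_refl := by
    rintro (a | a)
    · exact P.hle_refl a
    · exact Q.hle_refl a
  hle_antisymm := by
    rintro (a | a) (b | b) h1 h2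
    · exact congrArg Sum.inl (P.hle_antisymm a b h1 h2)
    · exact h1.elim
    · exact h1.elim
    · exact congrArg Sum.inr (Q.hle_antisymm a b h1 h2)
  hle_trans := by
    rintro (a | a) (b | b) (c | c) h1 h2 <;>
      first
        | exact P.hle_trans _ _ _ h1 h2
        | exact Q.hle_trans _ _ _ h1 h2
        | exact h1.elim
        | exact h2.elim
  rle_refl := by
    rintro (a | a)
    · exact P.rle_refl a
    · exact Q.rle_refl a
  rle_antisymm := by
    rintro (a | a) (b | b) h1 h2
    · exact congrArg Sum.inl (P.rle_antisymm a b h1 h2)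
    · exact h2.elim
    · exact h1.elim
    · exact congrArg Sum.inr (Q.rle_antisymm a b h1 h2)
  rle_trans := by
    rintro (a | a) (b | b) (c | c) h1 h2 <;>
      first
        | exact P.rle_trans _ _ _ h1 h2
        | exact Q.rle_trans _ _ _ h1 h2
        | exact h1.elim
        | exact h2.elim
        | trivial
  compat := by
    rintro (a | a) (b | b) hne
    · exact P.compat a b fun h => hne (congrArg Sum.inl h)
    · show (False ∨ False) ↔ ¬ (True ∨ False)
      simp
    · show (False ∨ False) ↔ ¬ (False ∨ True)
      simp
    · exact Q.compat a b fun h => hne (congrArg Sum.inr h)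

/-- The product `P ▷ Q` of two plane posets: `x ≤_h y` for every `x ∈ P`, `y ∈ Q`. -/
def hcomp (P : PlanePoset α) (Q : PlanePoset β) : PlanePoset (α ⊕ β) where
  hle x y :=
    match x, y with
    | Sum.inl a, Sum.inl b => P.hle a b
    | Sum.inr a, Sum.inr b => Q.hle a b
    | Sum.inl _, Sum.inr _ => True
    | Sum.inr _, Sum.inl _ => False
  rle x y :=
    match x, y with
    | Sum.inl a, Sum.inl b => P.rle a b
    | Sum.inr a, Sum.inr b => Q.rle a b
    | _, _ => False
  hle_refl := by
    rintro (a | a)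
    · exact P.hle_refl a
    · exact Q.hle_refl a
  hle_antisymm := by
    rintro (a | a) (b | b) h1 h2
    · exact congrArg Sum.inl (P.hle_antisymm a b h1 h2)
    · exact h2.elim
    · exact h1.elim
    · exact congrArg Sum.inr (Q.hle_antisymm a b h1 h2)
  hle_trans := by
    rintro (a | a) (b | b) (c | c) h1 h2 <;>
      first
        | exact P.hle_trans _ _ _ h1 h2
        | exact Q.hle_trans _ _ _ h1 h2
        | exact h1.elim
        | exact h2.elim
        | trivial
  rle_refl := by
    rintro (a | a)
    · exact P.rle_refl a
    · exact Q.rle_refl a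
  rle_antisymm := by
    rintro (a | a) (b | b) h1 h2
    · exact congrArg Sum.inl (P.rle_antisymm a b h1 h2)
    · exact h1.elim
    · exact h1.elim
    · exact congrArg Sum.inr (Q.rle_antisymm a b h1 h2)
  rle_trans := by
    rintro (a | a) (b | b) (c | c) h1 h2 <;>
      first
        | exact P.rle_trans _ _ _ h1 h2
        | exact Q.rle_trans _ _ _ h1 h2
        | exact h1.elim
        | exact h2.elim
  compat := by
    rintro (a | a) (b | b) hne
    · exact P.compat a b fun h => hne (congrArg Sum.inl h)
    · show (True ∨ False) ↔ ¬ (False ∨ False)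
      simp
    · show (False ∨ True) ↔ ¬ (False ∨ False)
      simp
    · exact Q.compat a b fun h => hne (congrArg Sum.inr h)

/-- Restriction of a plane poset to a subset (a plane subposet). -/
def res (P : PlanePoset α) (s : Finset α) : PlanePoset {x : α // x ∈ s} where
  hle x y := P.hle x.1 y.1
  rle x y := P.rle x.1 y.1
  hle_refl x := P.hle_refl _
  hle_antisymm x y h1 h2 := Subtype.ext (P.hle_antisymm _ _ h1 h2)
  hle_trans x y z h1 h2 := P.hle_trans _ _ _ h1 h2
  rle_refl x := P.rle_refl _
  rle_antisymm x y h1 h2 := Subtype.ext (P.rle_antisymm _ _ h1 h2)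
  rle_trans x y z h1 h2 := P.rle_trans _ _ _ h1 h2
  compat x y hxy := P.compat _ _ fun h => hxy (Subtype.ext h)

/-- The involution `ι` exchanging the two partial orders. -/
def swap (P : PlanePoset α) : PlanePoset α where
  hle := P.rle
  rle := P.hle
  hle_refl := P.rle_refl
  hle_antisymm := P.rle_antisymm
  hle_trans := P.rle_trans
  rle_refl := P.hle_refl
  rle_antisymm := P.hle_antisymm
  rle_trans := P.hle_trans
  compat x y hxy := by
    have h := P.compat x y hxy
    tauto

end PlanePoset

/-- A plane poset structure on `Fin n` is canonical when the induced total order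
is the usual order on `{1, …, n}`. -/
def IsCanon {n : ℕ} (P : PlanePoset (Fin n)) : Prop :=
  ∀ x y : Fin n, (P.hle x y ∨ P.rle x y) ↔ x ≤ y

/-- `PP(n)`: (isoclasses of) plane posets of cardinality `n`, realized as the canonical
plane poset structures on `{1, …, n}`. -/
def CanonPP (n : ℕ) : Type := { P : PlanePoset (Fin n) // IsCanon P }

namespace CanonPP

/-- The empty plane poset, unit of both products. -/
def one : CanonPP 0 :=
  ⟨{ hle := fun _ _ => True
     rle := fun _ _ => True
     hle_refl := fun _ => trivial
     hle_antisymm := fun x => x.elim0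
     hle_trans := fun _ _ _ _ _ => trivial
     rle_refl := fun _ => trivial
     rle_antisymm := fun x => x.elim0
     rle_trans := fun _ _ _ _ _ => trivial
     compat := fun x => x.elim0 }, fun x => x.elim0⟩

/-- The composition `PQ` of plane posets, realized canonically. -/
def comp {k l : ℕ} (P : CanonPP k) (Q : CanonPP l) : CanonPP (k + l) :=
  ⟨(P.1.comp Q.1).map finSumFinEquiv, by
    intro x y
    obtain ⟨a, rfl⟩ := finSumFinEquiv.surjective x
    obtain ⟨b, rfl⟩ := finSumFinEquiv.surjective y
    simp only [PlanePoset.map_hle, PlanePoset.map_rle, Equiv.symm_apply_apply]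
    rcases a with a | a <;> rcases b with b | b
    · show (P.1.hle a b ∨ P.1.rle a b) ↔ _
      rw [P.2 a b, finSumFinEquiv_apply_left, finSumFinEquiv_apply_left]
      simp only [Fin.le_def, Fin.coe_castAdd]
      try omega
    · show (False ∨ True) ↔ _
      rw [finSumFinEquiv_apply_left, finSumFinEquiv_apply_right]
      have ha := a.isLt
      simp only [false_or, true_iff, Fin.le_def, Fin.coe_castAdd, Fin.coe_natAdd]
      omega
    · show (False ∨ False) ↔ _
      rw [finSumFinEquiv_apply_right, finSumFinEquiv_apply_left]
      have hb := b.isLt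
      simp only [or_self, false_iff, Fin.le_def, Fin.coe_natAdd, Fin.coe_castAdd]
      omega
    · show (Q.1.hle a b ∨ Q.1.rle a b) ↔ _
      rw [Q.2 a b, finSumFinEquiv_apply_right, finSumFinEquiv_apply_right]
      simp only [Fin.le_def, Fin.coe_natAdd]
      omega⟩

/-- The product `P ▷ Q` of plane posets, realized canonically. -/
def hcomp {k l : ℕ} (P : CanonPP k) (Q : CanonPP l) : CanonPP (k + l) :=
  ⟨(P.1.hcomp Q.1).map finSumFinEquiv, by
    intro x y
    obtain ⟨a, rfl⟩ := finSumFinEquiv.surjective x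
    obtain ⟨b, rfl⟩ := finSumFinEquiv.surjective y
    simp only [PlanePoset.map_hle, PlanePoset.map_rle, Equiv.symm_apply_apply]
    rcases a with a | a <;> rcases b with b | b
    · show (P.1.hle a b ∨ P.1.rle a b) ↔ _
      rw [P.2 a b, finSumFinEquiv_apply_left, finSumFinEquiv_apply_left]
      simp only [Fin.le_def, Fin.coe_castAdd]
      try omega
    · show (True ∨ False) ↔ _
      rw [finSumFinEquiv_apply_left, finSumFinEquiv_apply_right]
      have ha := a.isLt
      simp only [or_false, true_iff, Fin.le_def, Fin.coe_castAdd, Fin.coe_natAdd]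
      omega
    · show (False ∨ False) ↔ _
      rw [finSumFinEquiv_apply_right, finSumFinEquiv_apply_left]
      have hb := b.isLt
      simp only [or_self, false_iff, Fin.le_def, Fin.coe_natAdd, Fin.coe_castAdd]
      omega
    · show (Q.1.hle a b ∨ Q.1.rle a b) ↔ _
      rw [Q.2 a b, finSumFinEquiv_apply_right, finSumFinEquiv_apply_right]
      simp only [Fin.le_def, Fin.coe_natAdd]
      omega⟩

/-- Restriction of a plane poset to a plane subposet, realized canonically via the unique
increasing bijection. -/
def restrict {n : ℕ} (P : CanonPP n) (s : Finset (Fin n)) : CanonPP s.card :=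
  ⟨(P.1.res s).map (s.orderIsoOfFin rfl).toEquiv.symm, by
    intro i j
    simp only [PlanePoset.map_hle, PlanePoset.map_rle, Equiv.symm_symm]
    show (P.1.hle ((s.orderIsoOfFin rfl).toEquiv i).1 ((s.orderIsoOfFin rfl).toEquiv j).1 ∨
          P.1.rle ((s.orderIsoOfFin rfl).toEquiv i).1 ((s.orderIsoOfFin rfl).toEquiv j).1) ↔ i ≤ j
    rw [P.2]
    rw [Subtype.coe_le_coe]
    exact (s.orderIsoOfFin rfl).le_iff_le⟩

/-- The involution `ι`, on canonical plane posets. -/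
def iota {n : ℕ} (P : CanonPP n) : CanonPP n :=
  ⟨P.1.swap, fun x y => by rw [or_comm]; exact P.2 x y⟩

end CanonPP

/-- The partial (weak Bruhat) order on `PP(n)`: `P ≤ Q` iff `x ≤_h y` in `Q` implies
`x ≤_h y` in `P` (the increasing bijection between canonical representatives being
the identity). -/
def PPle {n : ℕ} (P Q : CanonPP n) : Prop :=
  ∀ x y : Fin n, Q.1.hle x y → P.1.hle x y

/-- Strict version of the order on `PP(n)`. -/
def PPlt {n : ℕ} (P Q : CanonPP n) : Prop := PPle P Q ∧ P ≠ Q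

/-- Covering relation of the poset `(PP(n), ≤)`. -/
def PPcovBy {n : ℕ} (P Q : CanonPP n) : Prop :=
  PPlt P Q ∧ ∀ T : CanonPP n, PPlt P T → ¬ PPlt T Q

/-- `E(P) = {(i,j) | i <_h j}`. -/
def Eset {n : ℕ} (P : CanonPP n) : Set (Fin n × Fin n) :=
  {p | P.1.hle p.1 p.2 ∧ p.1 ≠ p.2}

/-- A biideal of a plane poset: an ideal for both partial orders, equivalently an ideal
for the induced total order. -/
def IsBiideal {n : ℕ} (P : CanonPP n) (I : Finset (Fin n)) : Prop :=
  ∀ x y : Fin n, x ∈ I → (P.1.hle x y ∨ P.1.rle x y) → y ∈ I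

/-- `h_s^t = #{(x,y) ∈ s × t | x <_h y}`. -/
def hNum {n : ℕ} (P : CanonPP n) (s t : Finset (Fin n)) : ℕ :=
  ((s ×ˢ t).filter (fun p : Fin n × Fin n => P.1.hle p.1 p.2 ∧ p.1 ≠ p.2)).card

/-- `φ(P,Q) = #{(x,y) | x <_r y in P and x <_h y in Q} + #{(x,y) | x <_h y in P and
x <_r y in Q}` (via the identity increasing bijection). -/
def phi {n : ℕ} (P Q : CanonPP n) : ℕ :=
  (Finset.univ.filter (fun p : Fin n × Fin n =>
      (P.1.rle p.1 p.2 ∧ p.1 ≠ p.2) ∧ (Q.1.hle p.1 p.2 ∧ p.1 ≠ p.2))).card +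
  (Finset.univ.filter (fun p : Fin n × Fin n =>
      (P.1.hle p.1 p.2 ∧ p.1 ≠ p.2) ∧ (Q.1.rle p.1 p.2 ∧ p.1 ≠ p.2))).card

/-- The level `ℓ(P) = #{(x,y) | x <_r y}`. -/
def level {n : ℕ} (P : CanonPP n) : ℕ :=
  (Finset.univ.filter (fun p : Fin n × Fin n => P.1.rle p.1 p.2 ∧ p.1 ≠ p.2)).card

/-- The plane poset `P_σ = Ψ_n(σ)` associated to a permutation `σ`. -/
def PsiPerm {n : ℕ} (σ : Equiv.Perm (Fin n)) : CanonPP n :=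
  ⟨{ hle := fun i j => i ≤ j ∧ σ.symm i ≤ σ.symm j
     rle := fun i j => i ≤ j ∧ σ.symm j ≤ σ.symm i
     hle_refl := fun x => ⟨le_refl x, le_refl _⟩
     hle_antisymm := fun x y h1 h2 => le_antisymm h1.1 h2.1
     hle_trans := fun x y z h1 h2 => ⟨le_trans h1.1 h2.1, le_trans h1.2 h2.2⟩
     rle_refl := fun x => ⟨le_refl x, le_refl _⟩
     rle_antisymm := fun x y h1 h2 => le_antisymm h1.1 h2.1
     rle_trans := fun x y z h1 h2 => ⟨le_trans h1.1 h2.1, le_trans h2.2 h1.2⟩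
     compat := by
       intro x y hxy
       have h1 : (x : ℕ) ≠ (y : ℕ) := fun h => hxy (Fin.ext h)
       have h2 : ((σ.symm x : Fin n) : ℕ) ≠ ((σ.symm y : Fin n) : ℕ) :=
         fun h => hxy (σ.symm.injective (Fin.ext h))
       simp only [Fin.le_def]
       omega },
   by
     intro x y
     show ((x ≤ y ∧ σ.symm x ≤ σ.symm y) ∨ (x ≤ y ∧ σ.symm y ≤ σ.symm x)) ↔ x ≤ y
     simp only [Fin.le_def]
     omega⟩

/-- One step of the weak Bruhat order: exchange two consecutive letters `i < j`
(`i` appearing immediately before `j`) in the word `σ(1) ⋯ σ(n)`. -/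
def bruhatStep {n : ℕ} (σ τ : Equiv.Perm (Fin n)) : Prop :=
  ∃ (i j k : Fin n) (hk : (k : ℕ) + 1 < n),
    i < j ∧ σ k = i ∧ σ ⟨(k : ℕ) + 1, hk⟩ = j ∧ τ = Equiv.swap i j * σ

/-- The set of (isoclasses of) plane posets. -/
abbrev PPS : Type := Σ n : ℕ, CanonPP n

/-- Composition product on plane posets. -/
def PPS.comp (P Q : PPS) : PPS := ⟨P.1 + Q.1, P.2.comp Q.2⟩

/-- The product `▷` on plane posets. -/
def PPS.hcomp (P Q : PPS) : PPS := ⟨P.1 + Q.1, P.2.hcomp Q.2⟩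

/-- Value of the coproduct `Δ_q` on a plane poset:
`Δ_q(P) = Σ_{I biideal of P} q^{h_{P∖I}^I} (P∖I) ⊗ I`. -/
def deltaOn (K : Type) [Field K] (q : K) {n : ℕ} (P : CanonPP n) :
    (PPS →₀ K) ⊗[K] (PPS →₀ K) :=
  ∑ I ∈ Finset.univ.filter (fun I : Finset (Fin n) => IsBiideal P I),
    q ^ hNum P Iᶜ I •
      (Finsupp.single (⟨Iᶜ.card, P.restrict Iᶜ⟩ : PPS) (1 : K) ⊗ₜ[K]
        Finsupp.single (⟨I.card, P.restrict I⟩ : PPS) (1 : K))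

/-- The coproduct `Δ_q` on `h_PP`, extended linearly. -/
def Delta (K : Type) [Field K] (q : K) :
    (PPS →₀ K) →ₗ[K] (PPS →₀ K) ⊗[K] (PPS →₀ K) :=
  Finsupp.lift _ K PPS fun P => deltaOn K q P.2

/-- The composition product `m`, extended bilinearly to `h_PP`. -/
def mulPP (K : Type) [Field K] : (PPS →₀ K) →ₗ[K] (PPS →₀ K) →ₗ[K] (PPS →₀ K) :=
  Finsupp.lift _ K PPS fun P =>
    Finsupp.lift _ K PPS fun Q => Finsupp.single (PPS.comp P Q) 1

/-- The componentwise product on `h_PP ⊗ h_PP`. -/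
def mulT (K : Type) [Field K] :
    ((PPS →₀ K) ⊗[K] (PPS →₀ K)) →ₗ[K] ((PPS →₀ K) ⊗[K] (PPS →₀ K)) →ₗ[K]
      ((PPS →₀ K) ⊗[K] (PPS →₀ K)) :=
  TensorProduct.map₂ (mulPP K) (mulPP K)

/-- Multiplication of the basis element of a plane poset by `q^{n·c}` where `n` is its
cardinality. -/
def scale (K : Type) [Field K] (q : K) (c : ℕ) : (PPS →₀ K) →ₗ[K] (PPS →₀ K) :=
  Finsupp.lift _ K PPS fun P => q ^ (P.1 * c) • Finsupp.single P 1

/-- Right multiplication by a plane poset for the product `▷`. -/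
def rmulH (K : Type) [Field K] (Q : PPS) : (PPS →₀ K) →ₗ[K] (PPS →₀ K) :=
  Finsupp.lift _ K PPS fun P => Finsupp.single (PPS.hcomp P Q) 1

/-- Left multiplication by a plane poset for the product `▷`. -/
def lmulH (K : Type) [Field K] (P : PPS) : (PPS →₀ K) →ₗ[K] (PPS →₀ K) :=
  Finsupp.lift _ K PPS fun Q => Finsupp.single (PPS.hcomp P Q) 1

/-- The pairing on plane posets of the same cardinality:
`⟨P,Q⟩_q = q^{φ(P,Q)}` if `ι(P) ≤ Q`, and `0` otherwise. -/
def pairN (K : Type) [Field K] (q : K) {n : ℕ} (P Q : CanonPP n) : K :=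
  if PPle (CanonPP.iota P) Q then q ^ phi P Q else 0

/-- The pairing `⟨-,-⟩_q` on plane posets (zero on posets of different cardinalities). -/
def pairPP (K : Type) [Field K] (q : K) (P Q : PPS) : K :=
  if h : P.1 = Q.1 then pairN K q (cast (congrArg CanonPP h) P.2) Q.2 else 0

/-- The pairing `⟨-,-⟩_q`, extended bilinearly to `h_PP`. -/
def Bform (K : Type) [Field K] (q : K) : (PPS →₀ K) →ₗ[K] (PPS →₀ K) →ₗ[K] K :=
  Finsupp.lift _ K PPS fun P => Finsupp.lift K K PPS fun Q => pairPP K q P Q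

end

/-!
In `P ▷ Q` every element of `P` is `≤_h`-below every element of `Q`. Hence `ι(P ▷ Q) ≤ R`
holds exactly when `x ≤_r y` in `R` for `x` among the first `|P|` elements and `y` among the
last `|Q|` ones, i.e. `R = R₁R₂` along these two blocks, and moreover `ι(P) ≤ R₁`,
`ι(Q) ≤ R₂`. On the other side, the set underlying `R₂` in a decomposition `R = R₁R₂` is an
upper set of the total order of `R`, so it is determined by its cardinality: at most one term
of the sum survives, the one along the blocks. For it, the pairs `(x, y) ∈ P × Q` contribute
exactly `|P| |Q|` to `φ(P ▷ Q, R)`, and the pairs inside the blocks `φ(P, R₁) + φ(Q, R₂)`.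
-/

namespace PlanePoset

variable {α β : Type}

theorem ext {P Q : PlanePoset α} (hh : P.hle = Q.hle) (hr : P.rle = Q.rle) : P = Q := by
  cases P
  cases Q
  cases hh
  cases hr
  rfl

def comap (f : α → β) (hf : Function.Injective f) (P : PlanePoset β) : PlanePoset α where
  hle x y := P.hle (f x) (f y)
  rle x y := P.rle (f x) (f y)
  hle_refl _ := P.hle_refl _
  hle_antisymm _ _ h₁ h₂ := hf (P.hle_antisymm _ _ h₁ h₂)
  hle_trans _ _ _ h₁ h₂ := P.hle_trans _ _ _ h₁ h₂
  rle_refl _ := P.rle_refl _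
  rle_antisymm _ _ h₁ h₂ := hf (P.rle_antisymm _ _ h₁ h₂)
  rle_trans _ _ _ h₁ h₂ := P.rle_trans _ _ _ h₁ h₂
  compat _ _ hxy := P.compat _ _ (hf.ne hxy)

end PlanePoset

namespace CanonPP

variable {n : ℕ}

theorem ext {P Q : CanonPP n} (hh : ∀ x y, P.1.hle x y ↔ Q.1.hle x y)
    (hr : ∀ x y, P.1.rle x y ↔ Q.1.rle x y) : P = Q :=
  Subtype.ext <| PlanePoset.ext (funext₂ fun x y => propext (hh x y))
    (funext₂ fun x y => propext (hr x y))

theorem not_hle_of_lt (R : CanonPP n) {x y : Fin n} (h : x < y) : ¬ R.1.hle y x :=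
  fun hyx => h.not_ge ((R.2 y x).1 (Or.inl hyx))

theorem not_rle_of_lt (R : CanonPP n) {x y : Fin n} (h : x < y) : ¬ R.1.rle y x :=
  fun hyx => h.not_ge ((R.2 y x).1 (Or.inr hyx))

theorem rle_iff_not_hle_of_lt (R : CanonPP n) {x y : Fin n} (h : x < y) :
    R.1.rle x y ↔ ¬ R.1.hle x y := by
  have := R.1.compat x y h.ne
  have := R.not_hle_of_lt h
  have := R.not_rle_of_lt h
  tauto

theorem lt_of_rle (R : CanonPP n) {x y : Fin n} (h : R.1.rle x y) (hne : x ≠ y) : x < y :=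
  lt_of_le_of_ne ((R.2 x y).1 (Or.inr h)) hne

def comap {a : ℕ} (f : Fin a ↪o Fin n) (R : CanonPP n) : CanonPP a :=
  ⟨R.1.comap f f.injective, fun x y => (R.2 (f x) (f y)).trans f.le_iff_le⟩

@[simp] theorem comap_hle {a : ℕ} (f : Fin a ↪o Fin n) (R : CanonPP n) (x y : Fin a) :
    (R.comap f).1.hle x y ↔ R.1.hle (f x) (f y) := Iff.rfl

@[simp] theorem comap_rle {a : ℕ} (f : Fin a ↪o Fin n) (R : CanonPP n) (x y : Fin a) :
    (R.comap f).1.rle x y ↔ R.1.rle (f x) (f y) := Iff.rfl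

@[simp] theorem iota_hle (A : CanonPP n) (x y : Fin n) : A.iota.1.hle x y ↔ A.1.rle x y :=
  Iff.rfl

theorem restrict_eq_comap (R : CanonPP n) (s : Finset (Fin n)) :
    R.restrict s = R.comap (s.orderEmbOfFin rfl) :=
  ext (fun _ _ => Iff.rfl) (fun _ _ => Iff.rfl)

theorem mk_restrict_eq_mk_comap {a : ℕ} (R : CanonPP n) (s : Finset (Fin n)) (h : s.card = a)
    (f : Fin a ↪o Fin n) (hf : ∀ x, f x ∈ s) :
    (⟨s.card, R.restrict s⟩ : PPS) = ⟨a, R.comap f⟩ := by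
  subst h
  rw [Finset.orderEmbOfFin_unique' rfl hf, restrict_eq_comap]

section hcomp

variable {k l : ℕ} (P : CanonPP k) (Q : CanonPP l) (a a' : Fin k) (b b' : Fin l)

@[simp] theorem hcomp_hle_castAdd_castAdd :
    (P.hcomp Q).1.hle (Fin.castAdd l a) (Fin.castAdd l a') ↔ P.1.hle a a' := by
  simp [hcomp, PlanePoset.hcomp]

@[simp] theorem hcomp_rle_castAdd_castAdd :
    (P.hcomp Q).1.rle (Fin.castAdd l a) (Fin.castAdd l a') ↔ P.1.rle a a' := by
  simp [hcomp, PlanePoset.hcomp]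

@[simp] theorem hcomp_hle_natAdd_natAdd :
    (P.hcomp Q).1.hle (Fin.natAdd k b) (Fin.natAdd k b') ↔ Q.1.hle b b' := by
  simp [hcomp, PlanePoset.hcomp]

@[simp] theorem hcomp_rle_natAdd_natAdd :
    (P.hcomp Q).1.rle (Fin.natAdd k b) (Fin.natAdd k b') ↔ Q.1.rle b b' := by
  simp [hcomp, PlanePoset.hcomp]

@[simp] theorem hcomp_hle_castAdd_natAdd :
    (P.hcomp Q).1.hle (Fin.castAdd l a) (Fin.natAdd k b) := by
  simp [hcomp, PlanePoset.hcomp]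

@[simp] theorem hcomp_not_rle_castAdd_natAdd :
    ¬ (P.hcomp Q).1.rle (Fin.castAdd l a) (Fin.natAdd k b) := by
  simp [hcomp, PlanePoset.hcomp]

@[simp] theorem hcomp_not_hle_natAdd_castAdd :
    ¬ (P.hcomp Q).1.hle (Fin.natAdd k b) (Fin.castAdd l a) := by
  simp [hcomp, PlanePoset.hcomp]

@[simp] theorem hcomp_not_rle_natAdd_castAdd :
    ¬ (P.hcomp Q).1.rle (Fin.natAdd k b) (Fin.castAdd l a) := by
  simp [hcomp, PlanePoset.hcomp]

end hcomp

end CanonPP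

theorem Fin.castAdd_lt_natAdd {k l : ℕ} (a : Fin k) (b : Fin l) :
    Fin.castAdd l a < Fin.natAdd k b := by
  rw [Fin.lt_def, Fin.val_castAdd, Fin.val_natAdd]
  omega

theorem Finset.eq_of_isUpperSet_of_card_eq {α : Type*} [LinearOrder α] {s t : Finset α}
    (hs : IsUpperSet (s : Set α)) (ht : IsUpperSet (t : Set α)) (h : s.card = t.card) :
    s = t := by
  rcases hs.total ht with hst | hts
  · exact Finset.eq_of_subset_of_card_le (Finset.coe_subset.1 hst) h.ge
  · exact (Finset.eq_of_subset_of_card_le (Finset.coe_subset.1 hts) h.le).symm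

open Finset in
theorem Fin.card_filter_fin_add {k l : ℕ} (D : Fin (k + l) × Fin (k + l) → Prop)
    [DecidablePred D] :
    #{p : Fin (k + l) × Fin (k + l) | D p} =
      #{p : Fin k × Fin k | D (castAdd l p.1, castAdd l p.2)} +
      #{p : Fin k × Fin l | D (castAdd l p.1, natAdd k p.2)} +
      #{p : Fin l × Fin k | D (natAdd k p.1, castAdd l p.2)} +
      #{p : Fin l × Fin l | D (natAdd k p.1, natAdd k p.2)} := by
  simp only [Finset.card_filter, Fintype.sum_prod_type, Fin.sum_univ_add, Finset.sum_add_distrib]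
  ring

/-- `I` is the set underlying `R₂` in a decomposition `R = R₁R₂`. -/
def IsCompDecomp {n : ℕ} (R : CanonPP n) (I : Finset (Fin n)) : Prop :=
  ∀ x ∉ I, ∀ y ∈ I, x ≠ y → R.1.rle x y

theorem IsCompDecomp.isUpperSet {n : ℕ} {R : CanonPP n} {I : Finset (Fin n)}
    (hI : IsCompDecomp R I) : IsUpperSet (I : Set (Fin n)) := by
  intro x y hxy hx
  by_contra hy
  have hne : y ≠ x := fun h => hy (h ▸ hx)
  exact (R.lt_of_rle (hI y hy x hx hne) hne).not_ge hxy

def upperBlock (k l : ℕ) : Finset (Fin (k + l)) :=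
  Finset.univ.map (Fin.natAddEmb k)

theorem coe_upperBlock (k l : ℕ) : (upperBlock k l : Set (Fin (k + l))) = {i | k ≤ i.1} := by
  rw [upperBlock, Finset.coe_map, Finset.coe_univ, Set.image_univ]
  exact Fin.range_natAdd k l

theorem card_upperBlock (k l : ℕ) : (upperBlock k l).card = l := by
  simp [upperBlock]

theorem card_compl_upperBlock (k l : ℕ) : (upperBlock k l)ᶜ.card = k := by
  rw [Finset.card_compl, card_upperBlock, Fintype.card_fin, Nat.add_sub_cancel]

theorem natAdd_mem_upperBlock {k l : ℕ} (b : Fin l) : Fin.natAdd k b ∈ upperBlock k l := by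
  simp [upperBlock]

theorem castAdd_mem_compl_upperBlock {k l : ℕ} (a : Fin k) :
    Fin.castAdd l a ∈ (upperBlock k l)ᶜ := by
  rw [Finset.mem_compl, ← Finset.mem_coe, coe_upperBlock]
  simp

theorem IsCompDecomp.eq_upperBlock {k l : ℕ} {R : CanonPP (k + l)} {I : Finset (Fin (k + l))}
    (hI : IsCompDecomp R I) (hc : I.card = l) : I = upperBlock k l := by
  refine Finset.eq_of_isUpperSet_of_card_eq hI.isUpperSet ?_ (hc.trans (card_upperBlock k l).symm)
  rw [coe_upperBlock]
  exact fun _ _ hab ha => Nat.le_trans ha hab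

theorem isCompDecomp_upperBlock_iff {k l : ℕ} (R : CanonPP (k + l)) :
    IsCompDecomp R (upperBlock k l) ↔ ∀ a b, R.1.rle (Fin.castAdd l a) (Fin.natAdd k b) := by
  constructor
  · intro h a b
    exact h _ (Finset.mem_compl.1 (castAdd_mem_compl_upperBlock a)) _ (natAdd_mem_upperBlock b)
      (Fin.castAdd_lt_natAdd a b).ne
  · intro h x hx y hy _
    induction x using Fin.addCases with
    | left a =>
      induction y using Fin.addCases with
      | left a' => exact absurd hy (Finset.mem_compl.1 (castAdd_mem_compl_upperBlock a'))
      | right b => exact h a b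
    | right b => exact absurd (natAdd_mem_upperBlock b) hx

section hcomp

variable {k l : ℕ} (P : CanonPP k) (Q : CanonPP l) (R : CanonPP (k + l))

theorem ppLe_iota_hcomp_iff :
    PPle (P.hcomp Q).iota R ↔ (∀ a b, R.1.rle (Fin.castAdd l a) (Fin.natAdd k b)) ∧
      PPle P.iota (R.comap (Fin.castAddOrderEmb l)) ∧
      PPle Q.iota (R.comap (Fin.natAddOrderEmb k)) := by
  have hcross a b : R.1.rle (Fin.castAdd l a) (Fin.natAdd k b) ↔
      ¬ R.1.hle (Fin.castAdd l a) (Fin.natAdd k b) :=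
    R.rle_iff_not_hle_of_lt (Fin.castAdd_lt_natAdd a b)
  have hback b a : ¬ R.1.hle (Fin.natAdd k b) (Fin.castAdd l a) :=
    R.not_hle_of_lt (Fin.castAdd_lt_natAdd a b)
  simp only [PPle, CanonPP.iota_hle, Fin.forall_fin_add, CanonPP.hcomp_rle_castAdd_castAdd,
    CanonPP.hcomp_rle_natAdd_natAdd, CanonPP.comap_hle, Fin.castAddOrderEmb_apply,
    Fin.natAddOrderEmb_apply, forall_and, hcross, hback, CanonPP.hcomp_not_rle_castAdd_natAdd,
    CanonPP.hcomp_not_rle_natAdd_castAdd, imp_false, not_false_eq_true, implies_true, and_true]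
  tauto

theorem phi_hcomp (hR : ∀ a b, R.1.rle (Fin.castAdd l a) (Fin.natAdd k b)) :
    phi (P.hcomp Q) R =
      k * l + phi P (R.comap (Fin.castAddOrderEmb l)) + phi Q (R.comap (Fin.natAddOrderEmb k)) := by
  have hne a b : Fin.castAdd l a ≠ Fin.natAdd k b := (Fin.castAdd_lt_natAdd a b).ne
  have hne' a b : Fin.natAdd k b ≠ Fin.castAdd l a := (Fin.castAdd_lt_natAdd a b).ne'
  simp only [phi]
  rw [Fin.card_filter_fin_add, Fin.card_filter_fin_add]
  simp only [CanonPP.hcomp_rle_castAdd_castAdd, CanonPP.hcomp_rle_natAdd_natAdd,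
    CanonPP.hcomp_hle_castAdd_castAdd, CanonPP.hcomp_hle_natAdd_natAdd,
    CanonPP.hcomp_hle_castAdd_natAdd, CanonPP.hcomp_not_rle_castAdd_natAdd,
    CanonPP.hcomp_not_hle_natAdd_castAdd, CanonPP.hcomp_not_rle_natAdd_castAdd,
    CanonPP.comap_hle, CanonPP.comap_rle, Fin.castAddOrderEmb_apply, Fin.natAddOrderEmb_apply,
    hR, hne, hne', ne_eq, not_false_eq_true, false_and, and_self, Finset.filter_false,
    Finset.filter_true, Fin.castAdd_inj, Fin.natAdd_inj, Finset.card_empty, Finset.card_univ,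
    Fintype.card_prod, Fintype.card_fin]
  ring

end hcomp

-- The filter is spelled out, not written `IsCompDecomp R`, so that its decidability instance
-- is syntactically the one of `statement17`.
theorem sum_filter_isCompDecomp {M : Type*} [AddCommMonoid M] {k l : ℕ} (R : CanonPP (k + l))
    (f : Finset (Fin (k + l)) → M) (hf : ∀ I, I.card ≠ l → f I = 0) :
    ∑ I ∈ Finset.univ.filter
        (fun I : Finset (Fin (k + l)) => ∀ x ∉ I, ∀ y ∈ I, x ≠ y → R.1.rle x y), f I =
      if IsCompDecomp R (upperBlock k l) then f (upperBlock k l) else 0 := by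
  rw [Finset.sum_filter, Finset.sum_eq_single (upperBlock k l) (fun I _ hI => ?_) (by simp)]
  · exact if_congr Iff.rfl rfl rfl
  · split_ifs with hI'
    · exact hf I fun hc => hI (IsCompDecomp.eq_upperBlock hI' hc)
    · rfl

section pairing

variable (K : Type) [Field K] (q : K)

theorem pairPP_mk_mk_self {n : ℕ} (A B : CanonPP n) :
    pairPP K q ⟨n, A⟩ ⟨n, B⟩ = pairN K q A B := by
  simp [pairPP]

theorem pairPP_mk_mk_of_ne {a n : ℕ} (A : CanonPP a) (B : CanonPP n) (h : a ≠ n) :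
    pairPP K q ⟨a, A⟩ ⟨n, B⟩ = 0 :=
  dif_neg h

theorem pairN_hcomp {k l : ℕ} (P : CanonPP k) (Q : CanonPP l) (R : CanonPP (k + l)) :
    pairN K q (P.hcomp Q) R =
      if IsCompDecomp R (upperBlock k l) then
        q ^ (k * l) * (pairN K q P (R.comap (Fin.castAddOrderEmb l)) *
          pairN K q Q (R.comap (Fin.natAddOrderEmb k)))
      else 0 := by
  by_cases hR : ∀ a b, R.1.rle (Fin.castAdd l a) (Fin.natAdd k b)
  · simp only [pairN, ppLe_iota_hcomp_iff, isCompDecomp_upperBlock_iff, hR,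
      phi_hcomp P Q R hR, pow_add]
    split_ifs <;> simp_all [mul_assoc]
  · simp only [pairN, ppLe_iota_hcomp_iff, isCompDecomp_upperBlock_iff, hR, false_and, if_false]

end pairing

/-- For all plane posets `P, Q, R`:
`⟨P ▷ Q, R⟩_q = Σ_{R = R₁R₂} q^{|R₁||R₂|} ⟨P, R₁⟩_q ⟨Q, R₂⟩_q`, the sum running over the
decompositions of `R` as a composition `R₁R₂` of plane subposets (`R₂` being indexed by the
subset `I` it occupies, with `x ≤_r y` for every `x ∈ R∖I`, `y ∈ I`); that is,
`⟨x ▷ y, z⟩_q = ⟨x ⊗ y, Δ'_q(z)⟩_q`. -/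
theorem statement17 (K : Type) [Field K] (q : K) {k l m : ℕ}
    (P : CanonPP k) (Q : CanonPP l) (R : CanonPP m) :
    pairPP K q (⟨k + l, P.hcomp Q⟩ : PPS) (⟨m, R⟩ : PPS) =
      ∑ I ∈ Finset.univ.filter
          (fun I : Finset (Fin m) => ∀ x ∉ I, ∀ y ∈ I, x ≠ y → R.1.rle x y),
        q ^ (Iᶜ.card * I.card) *
          (pairPP K q (⟨k, P⟩ : PPS) (⟨Iᶜ.card, R.restrict Iᶜ⟩ : PPS) *
            pairPP K q (⟨l, Q⟩ : PPS) (⟨I.card, R.restrict I⟩ : PPS)) := by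
  by_cases hm : m = k + l
  · subst hm
    rw [sum_filter_isCompDecomp R _ fun I hI => by
        rw [pairPP_mk_mk_of_ne K q Q _ (Ne.symm hI), mul_zero, mul_zero],
      CanonPP.mk_restrict_eq_mk_comap R _ (card_upperBlock k l) (Fin.natAddOrderEmb k)
        natAdd_mem_upperBlock,
      CanonPP.mk_restrict_eq_mk_comap R _ (card_compl_upperBlock k l) (Fin.castAddOrderEmb l)
        castAdd_mem_compl_upperBlock,
      card_upperBlock, card_compl_upperBlock, pairPP_mk_mk_self, pairPP_mk_mk_self,
      pairPP_mk_mk_self, pairN_hcomp]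
  · have hcard (I : Finset (Fin m)) : Iᶜ.card + I.card = m := by
      rw [Finset.card_compl_add_card, Fintype.card_fin]
    rw [pairPP_mk_mk_of_ne K q _ _ (Ne.symm hm)]
    refine (Finset.sum_eq_zero fun I _ => ?_).symm
    by_cases hc : I.card = l
    · rw [pairPP_mk_mk_of_ne K q P _ (by have := hcard I; omega), zero_mul, mul_zero]
    · rw [pairPP_mk_mk_of_ne K q Q _ (Ne.symm hc), mul_zero, mul_zero]
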